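/- arXiv:1203.3217 — 2 statements merged into one kernel-verified Lean document; each statement's English description precedes it below -/
import Mathlib

section
/- Under the hypotheses of the previous setting (X^n i.i.d. ∼ p(x), and the total variation between p(y^n|x^n)∏_q p(x_q) and ∏_q p(x_q)p̂(y_q|x_q) is less than ε < 1/2), for any random variable Q uniformly distributed on [1:n] and independent of (X^n, Y^n), we have I(Y_Q; Q | X_Q) ≤ 2(ε·log|Y| + h_b(ε)). -/
open Finset

/-- Total variation distance between two pmfs on a finite set: half the ℓ¹ distance. -/
noncomputable def TV {α : Type*} [Fintype α] (p q : α → ℝ) : ℝ :=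
  (∑ a, |p a - q a|) / 2

/-- Shannon entropy of a pmf. -/
noncomputable def ent {α : Type*} [Fintype α] (p : α → ℝ) : ℝ :=
  -∑ a, p a * Real.log (p a)

/-- Binary entropy function. -/
noncomputable def hb (t : ℝ) : ℝ := -t * Real.log t - (1 - t) * Real.log (1 - t)

/-- `p` is a probability mass function. -/
def IsPMF {α : Type*} [Fintype α] (p : α → ℝ) : Prop :=
  (∀ a, 0 ≤ p a) ∧ ∑ a, p a = 1

/-- Pushforward pmf (distribution of the random variable `X` under `μ`). -/
noncomputable def pushf {Ω α : Type*} [Fintype Ω] [DecidableEq α]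
    (μ : Ω → ℝ) (X : Ω → α) : α → ℝ :=
  fun a => ∑ ω ∈ Finset.univ.filter (fun ω => X ω = a), μ ω

/-- Entropy of a random variable `X` on a finite probability space with pmf `μ`. -/
noncomputable def Hent {Ω α : Type*} [Fintype Ω] [Fintype α] [DecidableEq α]
    (μ : Ω → ℝ) (X : Ω → α) : ℝ := ent (pushf μ X)

/-- Conditional mutual information `I(A ; C | B)` of random variables on a finite
probability space with pmf `μ`, defined via entropies:
`I(A;C|B) = H(A,B) + H(B,C) - H(A,B,C) - H(B)`. -/
noncomputable def condMI {Ω α β γ : Type*} [Fintype Ω] [Fintype α] [Fintype β] [Fintype γ]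
    [DecidableEq α] [DecidableEq β] [DecidableEq γ]
    (μ : Ω → ℝ) (A : Ω → α) (B : Ω → β) (C : Ω → γ) : ℝ :=
  Hent μ (fun ω => (A ω, B ω)) + Hent μ (fun ω => (B ω, C ω))
    - Hent μ (fun ω => (A ω, B ω, C ω)) - Hent μ B

/-!
Since `X_Q ∼ p` independently of `Q`, the conditional mutual information equals
`H(Y_Q, X_Q) - 𝔼_q H(Y_q, X_q)`: the entropy of the averaged single-letter law minus the average
entropy. Every single-letter law `J_q` of `(Y_q, X_q)` has `X`-marginal `p`, as does
`K = p · p̂`. By data processing `TV(J_q, K)` is at most the total variation in the hypothesis,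
hence `< ε`, and by convexity `TV(𝔼_q J_q, K) < ε` as well. For two laws with the same
`X`-marginal at distance `t`, splitting both along their overlap `min J K` gives
`H(J) - H(K) ≤ t log|Y| + h_b(t)`. Applied to `(𝔼_q J_q, K)` and to every `(K, J_q)`, and since
`t ↦ t log|Y| + h_b(t)` is monotone on `[0, 1/2]`, each of the two differences is at most
`ε log|Y| + h_b(ε)`.
-/

open Real
open scoped BigOperators

namespace Real

lemma negMulLog_add_le {x y : ℝ} (hx : 0 ≤ x) (hy : 0 ≤ y) :
    negMulLog (x + y) ≤ negMulLog x + negMulLog y := by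
  have mul_log_le : ∀ {x y : ℝ}, 0 ≤ x → 0 ≤ y → x * log x ≤ x * log (x + y) := by
    intro x y hx hy
    rcases hx.eq_or_lt with rfl | hx
    · simp
    · exact mul_le_mul_of_nonneg_left (log_le_log hx (by linarith)) hx.le
  have h1 := mul_log_le hx hy
  have h2 := mul_log_le hy hx
  rw [add_comm y] at h2
  simp only [negMulLog]
  linarith

lemma negMulLog_sum_le {ι : Type*} (s : Finset ι) {f : ι → ℝ} (hf : ∀ i ∈ s, 0 ≤ f i) :
    negMulLog (∑ i ∈ s, f i) ≤ ∑ i ∈ s, negMulLog (f i) :=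
  le_sum_of_subadditive_on_pred _ (0 ≤ ·) (by simp) (fun _ _ => negMulLog_add_le)
    (fun _ _ => add_nonneg) f hf

lemma negMulLog_inv (x : ℝ) : negMulLog x⁻¹ = x⁻¹ * log x := by
  simp [negMulLog, log_inv]

lemma sum_negMulLog_le {ι : Type*} [Fintype ι] {u : ι → ℝ} (hu : ∀ i, 0 ≤ u i) :
    ∑ i, negMulLog (u i) ≤ negMulLog (∑ i, u i) + (∑ i, u i) * log (Fintype.card ι) := by
  rcases isEmpty_or_nonempty ι with hι | hι
  · simp
  have hN : (0 : ℝ) < Fintype.card ι := by exact_mod_cast Fintype.card_pos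
  have jensen := concaveOn_negMulLog.le_map_sum (t := univ)
    (w := fun _ => (Fintype.card ι : ℝ)⁻¹) (p := u) (fun _ _ => by positivity) (by simp [hN.ne'])
    (fun i _ => hu i)
  simp only [smul_eq_mul, ← mul_sum, negMulLog_mul, negMulLog_inv] at jensen
  exact (mul_le_mul_iff_of_pos_left (inv_pos.2 hN)).1 (jensen.trans_eq (by ring))

lemma sum_negMulLog_add_sum_negMulLog_le {ι : Type*} [Fintype ι] {u v : ι → ℝ}
    (hu : ∀ i, 0 ≤ u i) (hv : ∀ i, 0 ≤ v i) (huv : ∑ i, u i + ∑ i, v i = 1) :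
    ∑ i, negMulLog (u i) + ∑ i, negMulLog (v i)
      ≤ ∑ i, negMulLog (u i + v i) + negMulLog (∑ i, u i) + negMulLog (∑ i, v i) := by
  set a := ∑ i, u i
  set b := ∑ i, v i
  rcases (sum_nonneg fun i _ => hu i : 0 ≤ a).eq_or_lt with ha | ha
  · have hu0 : ∀ i, u i = 0 := fun i =>
      (sum_eq_zero_iff_of_nonneg fun i _ => hu i).1 ha.symm i (mem_univ i)
    simp [hu0, show a = 0 from ha.symm, show b = 1 by linarith]
  rcases (sum_nonneg fun i _ => hv i : 0 ≤ b).eq_or_lt with hb | hb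
  · have hv0 : ∀ i, v i = 0 := fun i =>
      (sum_eq_zero_iff_of_nonneg fun i _ => hv i).1 hb.symm i (mem_univ i)
    simp [hv0, show b = 0 from hb.symm, show a = 1 by linarith]
  -- concavity of `negMulLog` at `u i + v i = a • (u i / a) + b • (v i / b)`
  have scaled : ∀ {x c : ℝ}, 0 < c → c * negMulLog (x / c) = negMulLog x + x * log c := by
    intro x c hc
    rw [div_eq_mul_inv, negMulLog_mul, negMulLog_inv]
    field_simp
  have pointwise : ∀ i, negMulLog (u i) + u i * log a + (negMulLog (v i) + v i * log b)
      ≤ negMulLog (u i + v i) := by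
    intro i
    have := concaveOn_negMulLog.2 (div_nonneg (hu i) ha.le) (div_nonneg (hv i) hb.le) ha.le hb.le
      huv
    simpa only [smul_eq_mul, scaled ha, scaled hb, mul_div_cancel₀ _ ha.ne',
      mul_div_cancel₀ _ hb.ne'] using this
  have := sum_le_sum fun i (_ : i ∈ univ) => pointwise i
  simp only [sum_add_distrib, ← sum_mul] at this
  have hna : negMulLog a = -(a * log a) := by simp [negMulLog]
  have hnb : negMulLog b = -(b * log b) := by simp [negMulLog]
  linarith

end Real

lemma ent_eq_sum_negMulLog {α : Type*} [Fintype α] (p : α → ℝ) :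
    ent p = ∑ a, negMulLog (p a) := by
  simp [ent, negMulLog, sum_neg_distrib]

lemma hb_eq_negMulLog_add (t : ℝ) : hb t = negMulLog t + negMulLog (1 - t) := by
  simp only [hb, negMulLog]
  ring

lemma hb_eq_binEntropy (t : ℝ) : hb t = binEntropy t := by
  rw [hb_eq_negMulLog_add, binEntropy_eq_negMulLog_add_negMulLog_one_sub]

lemma mul_log_add_hb_le_of_le (d : ℕ) {t e : ℝ} (ht : 0 ≤ t) (hte : t ≤ e) (he : e < 1 / 2) :
    t * log d + hb t ≤ e * log d + hb e := by
  have hhb : hb t ≤ hb e := by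
    rw [hb_eq_binEntropy, hb_eq_binEntropy]
    exact binEntropy_strictMonoOn.monotoneOn ⟨ht, by linarith⟩ ⟨by linarith, by linarith⟩ hte
  nlinarith [log_natCast_nonneg d]

section Marginal

variable {α β : Type*} [Fintype α] [Fintype β]

lemma sum_negMulLog_marginal_le {w : β × α → ℝ} (hw : ∀ c, 0 ≤ w c) :
    ∑ a, negMulLog (∑ b, w (b, a)) ≤ ∑ c, negMulLog (w c) := by
  rw [Fintype.sum_prod_type_right]
  exact sum_le_sum fun a _ => negMulLog_sum_le _ fun b _ => hw (b, a)

lemma sum_negMulLog_le_marginal_add {w : β × α → ℝ} (hw : ∀ c, 0 ≤ w c) :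
    ∑ c, negMulLog (w c)
      ≤ ∑ a, negMulLog (∑ b, w (b, a)) + (∑ c, w c) * log (Fintype.card β) := by
  rw [Fintype.sum_prod_type_right, Fintype.sum_prod_type_right, sum_mul, ← sum_add_distrib]
  exact sum_le_sum fun a _ => sum_negMulLog_le fun b => hw (b, a)

theorem ent_sub_ent_le_of_marginal_eq {J K : β × α → ℝ} (hJ : IsPMF J) (hK : IsPMF K)
    (hmarg : ∀ a, ∑ b, J (b, a) = ∑ b, K (b, a)) :
    ent J - ent K ≤ TV J K * log (Fintype.card β) + hb (TV J K) := by
  -- split `J = m + A` and `K = m + B` along the overlap `m = min J K`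
  set m := fun c => min (J c) (K c)
  set A := fun c => J c - m c
  set B := fun c => K c - m c
  have hm : ∀ c, 0 ≤ m c := fun c => le_min (hJ.1 c) (hK.1 c)
  have hA : ∀ c, 0 ≤ A c := fun c => sub_nonneg.2 (min_le_left _ _)
  have hB : ∀ c, 0 ≤ B c := fun c => sub_nonneg.2 (min_le_right _ _)
  have hsumA : ∑ c, A c = ∑ c, B c := by simp [A, B, sum_sub_distrib, hJ.2, hK.2]
  have hsum : ∑ c, m c + ∑ c, B c = 1 := by simp [B, sum_sub_distrib, hK.2]
  have hTV : TV J K = ∑ c, B c := by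
    have habs : ∀ c, |J c - K c| = A c + B c := by
      intro c
      rcases le_total (J c) (K c) with h | h
      · simp [A, B, m, abs_of_nonpos (sub_nonpos.2 h), min_eq_left h]
      · simp [A, B, m, abs_of_nonneg (sub_nonneg.2 h), min_eq_right h]
    simp only [TV, habs, sum_add_distrib, hsumA]
    ring
  have hmargAB : ∀ a, ∑ b, A (b, a) = ∑ b, B (b, a) := by simp [A, B, sum_sub_distrib, hmarg]
  have hJ_le : ent J ≤ ∑ c, negMulLog (m c) + ∑ c, negMulLog (A c) := by
    rw [ent_eq_sum_negMulLog, ← sum_add_distrib]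
    exact sum_le_sum fun c _ => by simpa [A] using negMulLog_add_le (hm c) (hA c)
  have hA_le : ∑ c, negMulLog (A c) ≤ ∑ c, negMulLog (B c) + TV J K * log (Fintype.card β) := by
    have := sum_negMulLog_le_marginal_add hA
    simp only [hmargAB, hsumA] at this
    rw [hTV]
    linarith [sum_negMulLog_marginal_le hB]
  have hK_ge : ∑ c, negMulLog (m c) + ∑ c, negMulLog (B c) ≤ ent K + hb (TV J K) := by
    have := sum_negMulLog_add_sum_negMulLog_le hm hB hsum
    simp only [m, B, add_sub_cancel] at this
    rw [ent_eq_sum_negMulLog, hb_eq_negMulLog_add, hTV, ← hsum, add_sub_cancel_right]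
    linarith
  linarith

end Marginal

section TotalVariation

variable {α : Type*} [Fintype α]

lemma TV_nonneg (p q : α → ℝ) : 0 ≤ TV p q := by
  unfold TV
  positivity

lemma TV_comm (p q : α → ℝ) : TV p q = TV q p := by
  simp only [TV, abs_sub_comm]

lemma TV_pushf_le {Ω : Type*} [Fintype Ω] [DecidableEq α] (μ ν : Ω → ℝ) (X : Ω → α) :
    TV (pushf μ X) (pushf ν X) ≤ TV μ ν := by
  unfold TV pushf
  gcongr ?_ / 2
  calc ∑ a, |∑ ω with X ω = a, μ ω - ∑ ω with X ω = a, ν ω|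
      = ∑ a, |∑ ω with X ω = a, (μ ω - ν ω)| := by simp only [sum_sub_distrib]
    _ ≤ ∑ a, ∑ ω with X ω = a, |μ ω - ν ω| := sum_le_sum fun a _ => abs_sum_le_sum_abs _ _
    _ = ∑ ω, |μ ω - ν ω| := sum_fiberwise _ _ _

lemma TV_expect_le {ι : Type*} [Fintype ι] [Nonempty ι] (P : ι → α → ℝ) (K : α → ℝ) :
    TV (fun a => 𝔼 i, P i a) K ≤ 𝔼 i, TV (P i) K := by
  have hdiff : ∀ a, 𝔼 i, P i a - K a = 𝔼 i, (P i a - K a) := fun a => by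
    rw [expect_sub_distrib, expect_const univ_nonempty]
  simp only [TV, ← expect_div, hdiff]
  rw [expect_sum_comm]
  gcongr ?_ / 2
  exact sum_le_sum fun a _ => abs_expect_le _ _

end TotalVariation

theorem ent_expect_sub_expect_ent_le {ι α β : Type*} [Fintype ι] [Nonempty ι] [Fintype α]
    [Fintype β] {J : ι → β × α → ℝ} {K : β × α → ℝ} (hJ : ∀ i, IsPMF (J i)) (hK : IsPMF K)
    (hmarg : ∀ i a, ∑ b, J i (b, a) = ∑ b, K (b, a)) {ε : ℝ} (hε : ε < 1 / 2)
    (hTV : ∀ i, TV (J i) K < ε) :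
    ent (fun c => 𝔼 i, J i c) - 𝔼 i, ent (J i) ≤ 2 * (ε * log (Fintype.card β) + hb ε) := by
  set Jbar := fun c => 𝔼 i, J i c
  have hJbar : IsPMF Jbar :=
    ⟨fun c => expect_nonneg fun i _ => (hJ i).1 c, by simp [Jbar, ← expect_sum_comm, (hJ _).2]⟩
  have hmarg_bar : ∀ a, ∑ b, Jbar (b, a) = ∑ b, K (b, a) := fun a => by
    simp [Jbar, ← expect_sum_comm, hmarg]
  have hTVbar : TV Jbar K < ε := (TV_expect_le J K).trans_lt <|
    expect_lt (fun i _ => (hTV i).le) ⟨Classical.arbitrary ι, mem_univ _, hTV _⟩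
  have hJbar_le : ent Jbar - ent K ≤ ε * log (Fintype.card β) + hb ε :=
    (ent_sub_ent_le_of_marginal_eq hJbar hK hmarg_bar).trans
      (mul_log_add_hb_le_of_le _ (TV_nonneg _ _) hTVbar.le hε)
  have hK_le : ∀ i, ent K - ent (J i) ≤ ε * log (Fintype.card β) + hb ε := fun i => by
    have := ent_sub_ent_le_of_marginal_eq hK (hJ i) fun a => (hmarg i a).symm
    rw [TV_comm] at this
    exact this.trans (mul_log_add_hb_le_of_le _ (TV_nonneg _ _) (hTV i).le hε)
  have hK_le_avg : ent K - 𝔼 i, ent (J i) ≤ ε * log (Fintype.card β) + hb ε := by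
    rw [← expect_const (univ_nonempty (α := ι)) (ent K), ← expect_sub_distrib]
    exact expect_le univ_nonempty fun i _ => hK_le i
  linarith

section Pushforward

variable {Ω α : Type*} [Fintype Ω] [DecidableEq α]

lemma pushf_apply (μ : Ω → ℝ) (X : Ω → α) (a : α) :
    pushf μ X a = ∑ ω, if X ω = a then μ ω else 0 :=
  sum_filter _ _

lemma sum_pushf [Fintype α] (μ : Ω → ℝ) (X : Ω → α) : ∑ a, pushf μ X a = ∑ ω, μ ω :=
  sum_fiberwise _ _ _

lemma isPMF_pushf [Fintype α] {μ : Ω → ℝ} (hμ : IsPMF μ) (X : Ω → α) : IsPMF (pushf μ X) :=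
  ⟨fun _ => sum_nonneg fun ω _ => hμ.1 ω, (sum_pushf μ X).trans hμ.2⟩

lemma sum_pushf_prod_fst [Fintype α] {β : Type*} [DecidableEq β] (μ : Ω → ℝ) (A : Ω → α)
    (B : Ω → β) (b : β) : ∑ a, pushf μ (fun ω => (A ω, B ω)) (a, b) = pushf μ B b := by
  simp only [pushf_apply, Prod.mk.injEq, ite_and]
  rw [sum_comm]
  simp

lemma pushf_equiv_comp {γ : Type*} [DecidableEq γ] (μ : Ω → ℝ) (X : Ω → α) (e : α ≃ γ)
    (c : γ) :
    pushf μ (fun ω => e (X ω)) c = pushf μ X (e.symm c) := by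
  simp only [pushf_apply, ← Equiv.eq_symm_apply]

lemma Hent_equiv_comp [Fintype α] {γ : Type*} [Fintype γ] [DecidableEq γ] (μ : Ω → ℝ)
    (X : Ω → α) (e : α ≃ γ) : Hent μ (fun ω => e (X ω)) = Hent μ X := by
  simp only [Hent, ent_eq_sum_negMulLog, pushf_equiv_comp]
  exact e.symm.sum_comp (fun a => negMulLog (pushf μ X a))

lemma pushf_comp_equiv {Ω' : Type*} [Fintype Ω'] (μ : Ω → ℝ) (X : Ω → α) (e : Ω' ≃ Ω) :
    pushf (fun ω => μ (e ω)) (fun ω => X (e ω)) = pushf μ X := by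
  funext a
  simp only [pushf_apply]
  exact e.sum_comp (fun ω => if X ω = a then μ ω else 0)

lemma pushf_comp_fst {Ω₁ Ω₂ : Type*} [Fintype Ω₁] [Fintype Ω₂] (μ : Ω₁ × Ω₂ → ℝ)
    (f : Ω₁ → α) :
    pushf μ (fun ω => f ω.1) = pushf (fun x => ∑ y, μ (x, y)) f := by
  funext a
  simp only [pushf_apply, Fintype.sum_prod_type]
  refine sum_congr rfl fun x _ => ?_
  split_ifs <;> simp

lemma pushf_pi_eval {ι S : Type*} [Fintype ι] [DecidableEq ι] [Fintype S] [DecidableEq S]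
    {g : S → ℝ} (hg : ∑ s, g s = 1) (i₀ : ι) :
    pushf (fun x : ι → S => ∏ i, g (x i)) (fun x => x i₀) = g := by
  funext s₀
  -- move the indicator of `x i₀ = s₀` into the `i₀`-th factor, then exchange `∑` and `∏`
  set f : ι → S → ℝ := fun i s => if i = i₀ then (if s = s₀ then g s else 0) else g s
  have hcompl : ∀ x : ι → S, ∏ i ∈ {i₀}ᶜ, f i (x i) = ∏ i ∈ {i₀}ᶜ, g (x i) :=
    fun x => prod_congr rfl fun i hi => if_neg (by simpa using hi)
  have hf : ∀ x : ι → S, (if x i₀ = s₀ then ∏ i, g (x i) else 0) = ∏ i, f i (x i) := by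
    intro x
    rw [Fintype.prod_eq_mul_prod_compl i₀, Fintype.prod_eq_mul_prod_compl i₀, hcompl]
    split_ifs <;> simp [f, *]
  rw [pushf_apply]
  simp only [hf]
  have hrest : ∏ i ∈ {i₀}ᶜ, ∑ s, f i s = 1 :=
    prod_eq_one fun i hi => by simp [f, show i ≠ i₀ by simpa using hi, hg]
  rw [← Fintype.prod_sum, Fintype.prod_eq_mul_prod_compl i₀, hrest]
  simp [f]

lemma pushf_pi_prod_eval {ι S T : Type*} [Fintype ι] [DecidableEq ι] [Fintype S] [DecidableEq S]
    [Fintype T] [DecidableEq T] {g : S × T → ℝ} (hg : ∑ c, g c = 1) (i₀ : ι) :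
    pushf (fun ω : (ι → S) × (ι → T) => ∏ i, g (ω.1 i, ω.2 i)) (fun ω => (ω.1 i₀, ω.2 i₀))
      = g := by
  rw [← pushf_comp_equiv _ _ (Equiv.arrowProdEquivProdArrow ι (fun _ => S) (fun _ => T))]
  exact pushf_pi_eval hg i₀

end Pushforward

section Source

variable {ι 𝒳 Ω₂ : Type*} [Fintype ι] [DecidableEq ι] [Fintype 𝒳] [Fintype Ω₂]
  {p : 𝒳 → ℝ} {V : (ι → 𝒳) → Ω₂ → ℝ}

lemma isPMF_pi_mul_kernel (hp : IsPMF p) (hV : ∀ x, (∀ y, 0 ≤ V x y) ∧ ∑ y, V x y = 1) :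
    IsPMF fun ω : (ι → 𝒳) × Ω₂ => (∏ i, p (ω.1 i)) * V ω.1 ω.2 := by
  refine ⟨fun ω => mul_nonneg (prod_nonneg fun i _ => hp.1 _) ((hV ω.1).1 ω.2), ?_⟩
  simp only [Fintype.sum_prod_type, ← mul_sum, (hV _).2, mul_one, ← Fintype.prod_sum, hp.2,
    prod_const_one]

lemma pushf_pi_mul_kernel_eval [DecidableEq 𝒳] (hp : ∑ a, p a = 1) (hV : ∀ x, ∑ y, V x y = 1)
    (q : ι) :
    pushf (fun ω : (ι → 𝒳) × Ω₂ => (∏ i, p (ω.1 i)) * V ω.1 ω.2) (fun ω => ω.1 q) = p := by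
  refine (pushf_comp_fst _ fun x : ι → 𝒳 => x q).trans ?_
  simp only [← mul_sum, hV, mul_one]
  exact pushf_pi_eval hp q

end Source

lemma ent_uniform_index {α : Type*} [Fintype α] {n : ℕ} (hn : n ≠ 0) {P : Fin n → α → ℝ}
    (hP : ∀ q, ∑ a, P q a = 1) :
    ent (fun aq : α × Fin n => P aq.2 aq.1 / n) = 𝔼 q, ent (P q) + log n := by
  have hq : ∀ q, ∑ a, negMulLog (P q a / n) = (ent (P q) + log n) / n := fun q => by
    simp only [div_eq_mul_inv, negMulLog_mul, negMulLog_inv, sum_add_distrib, ← sum_mul,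
      ← mul_sum, hP, ent_eq_sum_negMulLog]
    ring
  have : Nonempty (Fin n) := ⟨⟨0, Nat.pos_of_ne_zero hn⟩⟩
  rw [ent_eq_sum_negMulLog, Fintype.sum_prod_type_right]
  simp only [hq, Fintype.expect_eq_sum_div_card, Fintype.card_fin, ← sum_div, sum_add_distrib,
    sum_const, card_univ, nsmul_eq_mul]
  field_simp

section UniformIndex

variable {Ω α : Type*} [Fintype Ω] [DecidableEq α] {n : ℕ}

lemma pushf_uniform_index (μ : Ω → ℝ) (F : Fin n → Ω → α) :
    pushf (fun z : Fin n × Ω => μ z.2 / n) (fun z => F z.1 z.2)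
      = fun a => 𝔼 q, pushf μ (F q) a := by
  funext a
  simp only [pushf_apply, Fintype.sum_prod_type, Fintype.expect_eq_sum_div_card,
    Fintype.card_fin, sum_div, ite_div, zero_div]

lemma pushf_uniform_index_prod (μ : Ω → ℝ) (F : Fin n → Ω → α) :
    pushf (fun z : Fin n × Ω => μ z.2 / n) (fun z => (F z.1 z.2, z.1))
      = fun aq => pushf μ (F aq.2) aq.1 / n := by
  funext ⟨a, q⟩
  rw [pushf_apply, pushf_apply, Fintype.sum_prod_type,
    sum_eq_single q (fun b _ hb => by simp [hb]) (by simp), sum_div]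
  simp [ite_div]

theorem condMI_uniform_index {β : Type*} [Fintype α] [Fintype β] [DecidableEq β] (hn : n ≠ 0)
    {μ : Ω → ℝ} (hμ : ∑ ω, μ ω = 1) (A : Fin n → Ω → α) (B : Fin n → Ω → β) {P : β → ℝ}
    (hB : ∀ q, pushf μ (B q) = P) :
    condMI (fun z : Fin n × Ω => μ z.2 / n) (fun z => A z.1 z.2) (fun z => B z.1 z.2)
        (fun z => z.1)
      = ent (fun c => 𝔼 q, pushf μ (fun ω => (A q ω, B q ω)) c)
        - 𝔼 q, ent (pushf μ (fun ω => (A q ω, B q ω))) := by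
  have : Nonempty (Fin n) := ⟨⟨0, Nat.pos_of_ne_zero hn⟩⟩
  have hB_Q : Hent (fun z : Fin n × Ω => μ z.2 / n) (fun z => B z.1 z.2) = ent P := by
    simp [Hent, pushf_uniform_index, hB]
  have hBQ : Hent (fun z : Fin n × Ω => μ z.2 / n) (fun z => (B z.1 z.2, z.1))
      = ent P + log n := by
    rw [Hent, pushf_uniform_index_prod, ent_uniform_index hn fun q => (sum_pushf μ _).trans hμ]
    simp [hB]
  have hABQ : Hent (fun z : Fin n × Ω => μ z.2 / n) (fun z => (A z.1 z.2, B z.1 z.2, z.1))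
      = 𝔼 q, ent (pushf μ (fun ω => (A q ω, B q ω))) + log n := by
    have hassoc := Hent_equiv_comp (fun z : Fin n × Ω => μ z.2 / n)
      (fun z => ((A z.1 z.2, B z.1 z.2), z.1)) (Equiv.prodAssoc α β (Fin n))
    simp only [Equiv.prodAssoc_apply] at hassoc
    rw [hassoc, Hent, pushf_uniform_index_prod μ fun q ω => (A q ω, B q ω)]
    exact ent_uniform_index (P := fun q => pushf μ fun ω => (A q ω, B q ω)) hn
      fun q => (sum_pushf μ _).trans hμ
  rw [condMI, hB_Q, hBQ, hABQ, Hent, pushf_uniform_index μ fun q ω => (A q ω, B q ω)]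
  ring

end UniformIndex

/-- Under the hypotheses of Statement 7, for `Q` uniform on `[1:n]`
and independent of `(X^n, Y^n)` (realized on the extended space `Fin n × Ω` with
pmf `μ'(q,ω) = μ(ω)/n`), we have `I(Y_Q; Q | X_Q) ≤ 2(ε·log|Y| + h_b(ε))`. -/
theorem condMI_randomized_index_bound {n : ℕ} {𝒳 𝒴 : Type*} [Fintype 𝒳] [Fintype 𝒴]
    [DecidableEq 𝒳] [DecidableEq 𝒴] (hn : 0 < n)
    (p : 𝒳 → ℝ) (V : (Fin n → 𝒳) → (Fin n → 𝒴) → ℝ) (phat : 𝒴 → 𝒳 → ℝ) (ε : ℝ)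
    (hp : IsPMF p)
    (hV : ∀ x, (∀ y, 0 ≤ V x y) ∧ ∑ y, V x y = 1)
    (hphat : ∀ x, (∀ y, 0 ≤ phat y x) ∧ ∑ y, phat y x = 1)
    (hε : ε < 1/2)
    (hTV : TV (fun ω : (Fin n → 𝒳) × (Fin n → 𝒴) => (∏ q, p (ω.1 q)) * V ω.1 ω.2)
        (fun ω => ∏ q, p (ω.1 q) * phat (ω.2 q) (ω.1 q)) < ε) :
    condMI (fun z : Fin n × ((Fin n → 𝒳) × (Fin n → 𝒴)) =>
          ((∏ i, p (z.2.1 i)) * V z.2.1 z.2.2) / n)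
        (fun z => z.2.2 z.1) (fun z => z.2.1 z.1) (fun z => z.1)
      ≤ 2 * (ε * Real.log (Fintype.card 𝒴) + hb ε) := by
  set μ : (Fin n → 𝒳) × (Fin n → 𝒴) → ℝ := fun ω => (∏ i, p (ω.1 i)) * V ω.1 ω.2
  set ν : (Fin n → 𝒳) × (Fin n → 𝒴) → ℝ := fun ω => ∏ q, p (ω.1 q) * phat (ω.2 q) (ω.1 q)
  set K : 𝒴 × 𝒳 → ℝ := fun c => p c.2 * phat c.1 c.2
  have hμ : IsPMF μ := isPMF_pi_mul_kernel hp hV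
  have hX : ∀ q, pushf μ (fun ω => ω.1 q) = p :=
    pushf_pi_mul_kernel_eval hp.2 fun x => (hV x).2
  have hK_marg : ∀ x, ∑ y, K (y, x) = p x := fun x => by simp [K, ← mul_sum, (hphat x).2]
  have hK : IsPMF K := ⟨fun c => mul_nonneg (hp.1 _) ((hphat _).1 _), by
    rw [Fintype.sum_prod_type_right]
    simp only [hK_marg, hp.2]⟩
  have hν : ∀ q, pushf ν (fun ω => (ω.2 q, ω.1 q)) = K := fun q => by
    have hg : ∑ c : 𝒳 × 𝒴, p c.1 * phat c.2 c.1 = 1 := by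
      rw [← hK.2, ← (Equiv.prodComm 𝒳 𝒴).sum_comp]
      rfl
    funext c
    refine (pushf_equiv_comp ν (fun ω => (ω.1 q, ω.2 q)) (Equiv.prodComm _ _) c).trans ?_
    rw [pushf_pi_prod_eval hg q]
    rfl
  have hTVq : ∀ q, TV (pushf μ fun ω => (ω.2 q, ω.1 q)) K < ε := fun q => by
    rw [← hν q]
    exact (TV_pushf_le μ ν _).trans_lt hTV
  have : Nonempty (Fin n) := Fin.pos_iff_nonempty.1 hn
  rw [condMI_uniform_index hn.ne' hμ.2 (fun q ω => ω.2 q) (fun q ω => ω.1 q) hX]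
  exact ent_expect_sub_expect_ent_le (fun q => isPMF_pushf hμ _) hK
    (fun q x => by rw [sum_pushf_prod_fst μ (fun ω => ω.2 q) (fun ω => ω.1 q), hX, hK_marg])
    hε hTVq
end

section
/- Let ω, C_{[1:r]}, X_1^n, X_2^n, Y_1^n, Y_2^n be finite random variables satisfying: ω independent of i.i.d. (X_1^n, X_2^n); C_i — ω C_{[1:i-1]} X_1^n — X_2^n for odd i; C_i — ω C_{[1:i-1]} X_2^n — X_1^n for even i; Y_1^n — ω C_{[1:r]} X_1^n — (X_2^n, Y_2^n); and Y_2^n — ω C_{[1:r]} X_2^n — (X_1^n, Y_1^n). Then for each q, the Markov chain Y_{1,q} — (ω, C_{[1:r]}, X_1^{q:n}, X_2^{1:q-1}) — (X_{2,q}, Y_{2,q}) holds. -/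
open Finset

/-! Call the joint law of `(U, S₁, S₂)` rectangular with weight `w` if it has the form
`w s₁ s₂ * φ u s₁ * ψ u s₂`. The law of `(G, X₁ⁿ, X₂ⁿ)` is rectangular with the i.i.d. weight
`∏ j, p (x₁ j, x₂ j)`. A message that depends on the other party's input only through the
current transcript and the speaker's own input multiplies the law by a conditional probability
living on one side, so rectangularity survives conditioning on the whole transcript, and then
appending `Y₁ⁿ` to the first side and `Y₂ⁿ` to the second. At letter `q` the weight splits into
`∏_{j<q}`, a function of side 1 and `X₂^{1:q-1}`, times `∏_{j≥q}`, a function of `X₁^{q:n}` and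
side 2; so once `X₁^{q:n}` and `X₂^{1:q-1}` are conditioned on, the law factors into a side-1
term and a side-2 term, which is the Markov chain. -/

open Function Real InformationTheory

section Probability

variable {Ω α : Type*} [Fintype Ω]

open Classical in
noncomputable def Pr (μ : Ω → ℝ) (E : Ω → Prop) : ℝ :=
  ∑ ω, if E ω then μ ω else 0

variable {μ : Ω → ℝ}

theorem Pr_congr {E E' : Ω → Prop} (h : ∀ ω, E ω ↔ E' ω) : Pr μ E = Pr μ E' :=
  congrArg (Pr μ) (funext fun ω => propext (h ω))

theorem Pr_nonneg (hμ : IsPMF μ) (E : Ω → Prop) : 0 ≤ Pr μ E :=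
  Finset.sum_nonneg fun ω _ => by split_ifs <;> simp [hμ.1 ω]

theorem Pr_mono (hμ : IsPMF μ) {E E' : Ω → Prop} (h : ∀ ω, E ω → E' ω) :
    Pr μ E ≤ Pr μ E' :=
  Finset.sum_le_sum fun ω _ => by
    by_cases hE : E ω
    · simp [hE, h ω hE]
    · by_cases hE' : E' ω <;> simp [hE, hE', hμ.1 ω]

theorem Pr_eq_sum_and [Fintype α] (E : Ω → Prop) (Z : Ω → α) :
    Pr μ E = ∑ z, Pr μ (fun ω => Z ω = z ∧ E ω) := by
  classical
  unfold Pr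
  rw [Finset.sum_comm]
  refine Finset.sum_congr rfl fun ω _ => ?_
  by_cases hE : E ω <;> simp [hE]

theorem Pr_and_eq_sum_ite [Fintype α] (E : Ω → Prop) (Z : Ω → α) (P : α → Prop)
    [DecidablePred P] :
    Pr μ (fun ω => E ω ∧ P (Z ω)) = ∑ z, if P z then Pr μ (fun ω => E ω ∧ Z ω = z) else 0 := by
  classical
  simp only [Pr, ← Finset.sum_filter]
  rw [Finset.sum_comm]
  refine Finset.sum_congr rfl fun ω _ => ?_
  by_cases hE : E ω <;> simp [hE]

theorem sum_Pr_eq_one [Fintype α] (hμ : IsPMF μ) (Z : Ω → α) :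
    ∑ z, Pr μ (fun ω => Z ω = z) = 1 := by
  classical
  simpa [Pr, hμ.2] using (Pr_eq_sum_and (μ := μ) (fun _ => True) Z).symm

theorem pushf_eq_Pr [DecidableEq α] (X : Ω → α) (a : α) :
    pushf μ X a = Pr μ (fun ω => X ω = a) := by
  simp only [pushf, Pr, Finset.sum_filter]
  convert rfl

theorem sum_mul_comp_eq_sum_pushf_mul [Fintype α] [DecidableEq α] (X : Ω → α) (g : α → ℝ) :
    ∑ ω, μ ω * g (X ω) = ∑ x, pushf μ X x * g x := by
  simp only [pushf, Finset.sum_mul]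
  rw [← Finset.sum_fiberwise Finset.univ X]
  exact Finset.sum_congr rfl fun x _ => Finset.sum_congr rfl fun ω hω => by
    rw [(Finset.mem_filter.mp hω).2]

theorem Hent_eq_neg_sum [Fintype α] [DecidableEq α] (X : Ω → α) :
    Hent μ X = -∑ ω, μ ω * log (pushf μ X (X ω)) := by
  rw [sum_mul_comp_eq_sum_pushf_mul X (fun x => log (pushf μ X x))]
  rfl

end Probability

theorem sum_mul_log_div_eq_zero_iff {ι : Type*} [Fintype ι] {P Q : ι → ℝ}
    (hP : ∀ i, 0 ≤ P i) (hQ : ∀ i, 0 ≤ Q i) (hPQ : ∀ i, Q i = 0 → P i = 0)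
    (hsum : ∑ i, P i = ∑ i, Q i) :
    ∑ i, P i * log (P i / Q i) = 0 ↔ P = Q := by
  have hdiv : ∀ i, 0 ≤ P i / Q i := fun i => div_nonneg (hP i) (hQ i)
  have hterm : ∀ i, P i * log (P i / Q i) = Q i * klFun (P i / Q i) + (P i - Q i) := by
    intro i
    rcases (hQ i).eq_or_lt with h | h
    · simp [← h, hPQ i h.symm]
    · rw [klFun_apply]
      field_simp
      ring
  have hkl : ∑ i, P i * log (P i / Q i) = ∑ i, Q i * klFun (P i / Q i) := by
    simp only [hterm, Finset.sum_add_distrib, Finset.sum_sub_distrib, hsum, sub_self, add_zero]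
  rw [hkl, Finset.sum_eq_zero_iff_of_nonneg fun i _ => mul_nonneg (hQ i) (klFun_nonneg (hdiv i))]
  simp only [Finset.mem_univ, true_implies, mul_eq_zero, funext_iff]
  refine forall_congr' fun i => ?_
  rcases eq_or_ne (Q i) 0 with h0 | h0
  · simp [h0, hPQ i h0]
  · rw [klFun_eq_zero_iff (hdiv i), div_eq_one_iff_eq h0]
    simp [h0]

section ConditionalMutualInformation

variable {Ω α β γ : Type*} [Fintype Ω] {μ : Ω → ℝ}

theorem condMI_eq_sum_mul_log [Fintype α] [Fintype β] [Fintype γ]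
    [DecidableEq α] [DecidableEq β] [DecidableEq γ] (A : Ω → α) (B : Ω → β) (C : Ω → γ) :
    condMI μ A B C = ∑ t : α × β × γ, pushf μ (fun ω => (A ω, B ω, C ω)) t *
      (log (pushf μ (fun ω => (A ω, B ω, C ω)) t) + log (pushf μ B t.2.1)
        - log (pushf μ (fun ω => (A ω, B ω)) (t.1, t.2.1))
        - log (pushf μ (fun ω => (B ω, C ω)) t.2)) := by
  rw [← sum_mul_comp_eq_sum_pushf_mul (fun ω => (A ω, B ω, C ω))]
  simp only [condMI, Hent_eq_neg_sum, mul_add, mul_sub, Finset.sum_add_distrib,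
    Finset.sum_sub_distrib]
  ring

/-- The law of `(A, B, C)` that keeps the `(A, B)` and `(B, C)` marginals and makes
`A — B — C` a Markov chain; it is `0` where `Pr(B = b) = 0`, since `x / 0 = 0`. -/
noncomputable def markovPr (μ : Ω → ℝ) (A : Ω → α) (B : Ω → β) (C : Ω → γ) (t : α × β × γ) :
    ℝ :=
  Pr μ (fun ω => A ω = t.1 ∧ B ω = t.2.1) * Pr μ (fun ω => B ω = t.2.1 ∧ C ω = t.2.2)
    / Pr μ (fun ω => B ω = t.2.1)

variable (hμ : IsPMF μ) (A : Ω → α) (B : Ω → β) (C : Ω → γ)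
include hμ

theorem markovPr_nonneg (t : α × β × γ) : 0 ≤ markovPr μ A B C t :=
  div_nonneg (mul_nonneg (Pr_nonneg hμ _) (Pr_nonneg hμ _)) (Pr_nonneg hμ _)

theorem Pr_eq_zero_of_markovPr_eq_zero {t : α × β × γ} (h : markovPr μ A B C t = 0) :
    Pr μ (fun ω => A ω = t.1 ∧ B ω = t.2.1 ∧ C ω = t.2.2) = 0 := by
  refine le_antisymm ?_ (Pr_nonneg hμ _)
  simp only [markovPr, div_eq_zero_iff, mul_eq_zero] at h
  rcases h with (h | h) | h <;> rw [← h] <;> exact Pr_mono hμ fun ω h => by tauto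

theorem Pr_eq_markovPr_iff (a : α) (b : β) (c : γ) :
    Pr μ (fun ω => A ω = a ∧ B ω = b ∧ C ω = c) = markovPr μ A B C (a, b, c) ↔
      Pr μ (fun ω => A ω = a ∧ B ω = b ∧ C ω = c) * Pr μ (fun ω => B ω = b)
        = Pr μ (fun ω => A ω = a ∧ B ω = b) * Pr μ (fun ω => B ω = b ∧ C ω = c) := by
  rcases eq_or_ne (Pr μ (fun ω => B ω = b)) 0 with h0 | h0
  · have hAB : Pr μ (fun ω => A ω = a ∧ B ω = b) = 0 :=
      le_antisymm (h0 ▸ Pr_mono hμ fun ω h => h.2) (Pr_nonneg hμ _)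
    have hABC : Pr μ (fun ω => A ω = a ∧ B ω = b ∧ C ω = c) = 0 :=
      le_antisymm (hAB ▸ Pr_mono hμ fun ω h => ⟨h.1, h.2.1⟩) (Pr_nonneg hμ _)
    simp [markovPr, h0, hAB, hABC]
  · exact eq_div_iff h0

variable [Fintype α] [Fintype β] [Fintype γ]

theorem sum_markovPr : ∑ t, markovPr μ A B C t = 1 := by
  rw [← sum_Pr_eq_one hμ B]
  simp only [markovPr, Fintype.sum_prod_type]
  rw [Finset.sum_comm]
  refine Finset.sum_congr rfl fun b _ => ?_
  have hBC : ∑ c, Pr μ (fun ω => B ω = b ∧ C ω = c) = Pr μ (fun ω => B ω = b) :=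
    ((Pr_eq_sum_and _ C).trans (Finset.sum_congr rfl fun c _ => Pr_congr fun ω => and_comm)).symm
  simp only [← Finset.sum_div, ← Finset.sum_mul_sum, ← Pr_eq_sum_and _ A, hBC, mul_self_div_self]

variable [DecidableEq α] [DecidableEq β] [DecidableEq γ]

theorem condMI_eq_sum_mul_log_div_markovPr :
    condMI μ A B C = ∑ t, Pr μ (fun ω => A ω = t.1 ∧ B ω = t.2.1 ∧ C ω = t.2.2)
      * log (Pr μ (fun ω => A ω = t.1 ∧ B ω = t.2.1 ∧ C ω = t.2.2) / markovPr μ A B C t) := by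
  rw [condMI_eq_sum_mul_log]
  refine Finset.sum_congr rfl fun ⟨a, b, c⟩ _ => ?_
  simp only [pushf_eq_Pr, Prod.mk.injEq, markovPr]
  rcases (Pr_nonneg hμ (fun ω => A ω = a ∧ B ω = b ∧ C ω = c)).eq_or_lt with h0 | hpos
  · simp [← h0]
  · have hAB : Pr μ (fun ω => A ω = a ∧ B ω = b) ≠ 0 :=
      (hpos.trans_le (Pr_mono hμ fun ω h => ⟨h.1, h.2.1⟩)).ne'
    have hBC : Pr μ (fun ω => B ω = b ∧ C ω = c) ≠ 0 :=
      (hpos.trans_le (Pr_mono hμ fun ω h => h.2)).ne'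
    have hB : Pr μ (fun ω => B ω = b) ≠ 0 := (hpos.trans_le (Pr_mono hμ fun ω h => h.2.1)).ne'
    rw [log_div hpos.ne' (div_ne_zero (mul_ne_zero hAB hBC) hB),
      log_div (mul_ne_zero hAB hBC) hB, log_mul hAB hBC]
    ring

theorem condMI_eq_zero_iff :
    condMI μ A B C = 0 ↔ ∀ a b c,
      Pr μ (fun ω => A ω = a ∧ B ω = b ∧ C ω = c) * Pr μ (fun ω => B ω = b)
        = Pr μ (fun ω => A ω = a ∧ B ω = b) * Pr μ (fun ω => B ω = b ∧ C ω = c) := by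
  have hsum : ∑ t : α × β × γ, Pr μ (fun ω => A ω = t.1 ∧ B ω = t.2.1 ∧ C ω = t.2.2) = 1 := by
    rw [← sum_Pr_eq_one hμ (fun ω => (A ω, B ω, C ω))]
    exact Finset.sum_congr rfl fun t _ => Pr_congr fun ω => by simp [Prod.ext_iff]
  rw [condMI_eq_sum_mul_log_div_markovPr hμ, sum_mul_log_div_eq_zero_iff (fun _ => Pr_nonneg hμ _)
    (markovPr_nonneg hμ A B C) (fun _ => Pr_eq_zero_of_markovPr_eq_zero hμ A B C)
    (by rw [hsum, sum_markovPr hμ])]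
  simp only [funext_iff, Prod.forall, Pr_eq_markovPr_iff hμ]

end ConditionalMutualInformation

section ConditionalIndependence

variable {Ω α β γ δ : Type*} [Fintype Ω] [Fintype α] [Fintype β] [Fintype γ] [Fintype δ]
  [DecidableEq α] [DecidableEq β] [DecidableEq γ] [DecidableEq δ] {μ : Ω → ℝ}

theorem Pr_eq_div_mul_of_condMI_eq_zero (hμ : IsPMF μ) {A : Ω → α} {B : Ω → β} {C : Ω → γ}
    (h : condMI μ A B C = 0) (a : α) (b : β) (c : γ) :
    Pr μ (fun ω => A ω = a ∧ B ω = b ∧ C ω = c)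
      = Pr μ (fun ω => A ω = a ∧ B ω = b) / Pr μ (fun ω => B ω = b)
        * Pr μ (fun ω => B ω = b ∧ C ω = c) := by
  have key := (condMI_eq_zero_iff hμ A B C).mp h a b c
  rcases eq_or_ne (Pr μ (fun ω => B ω = b)) 0 with hb | hb
  · rw [hb, div_zero, zero_mul]
    exact le_antisymm (hb ▸ Pr_mono hμ fun ω h => h.2.1) (Pr_nonneg hμ _)
  · rw [div_mul_eq_mul_div, eq_div_iff hb, key]

theorem condMI_eq_zero_of_factor (hμ : IsPMF μ) {A : Ω → α} {B : Ω → β} {C : Ω → γ}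
    (f : α → β → ℝ) (k : β → γ → ℝ)
    (h : ∀ a b c, Pr μ (fun ω => A ω = a ∧ B ω = b ∧ C ω = c) = f a b * k b c) :
    condMI μ A B C = 0 := by
  refine (condMI_eq_zero_iff hμ A B C).mpr fun a b c => ?_
  have hAB : Pr μ (fun ω => A ω = a ∧ B ω = b) = f a b * ∑ c', k b c' := by
    rw [Pr_eq_sum_and _ C, Finset.mul_sum]
    exact Finset.sum_congr rfl fun c' _ => (Pr_congr fun ω => by tauto).trans (h a b c')
  have hBC : Pr μ (fun ω => B ω = b ∧ C ω = c) = (∑ a', f a' b) * k b c := by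
    rw [Pr_eq_sum_and _ A, Finset.sum_mul]
    exact Finset.sum_congr rfl fun a' _ => h a' b c
  have hB : Pr μ (fun ω => B ω = b) = (∑ a', f a' b) * ∑ c', k b c' := by
    rw [Pr_eq_sum_and _ A, Finset.sum_mul_sum]
    refine Finset.sum_congr rfl fun a' _ => ?_
    rw [Pr_eq_sum_and _ C]
    exact Finset.sum_congr rfl fun c' _ => (Pr_congr fun ω => by tauto).trans (h a' b c')
  rw [h, hAB, hBC, hB]
  ring

theorem condMI_comp_right_eq_zero (hμ : IsPMF μ) {A : Ω → α} {B : Ω → β} {C : Ω → γ}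
    (h : condMI μ A B C = 0) (g : γ → δ) : condMI μ A B (fun ω => g (C ω)) = 0 := by
  refine condMI_eq_zero_of_factor hμ
    (fun a b => Pr μ (fun ω => A ω = a ∧ B ω = b) / Pr μ (fun ω => B ω = b))
    (fun b d => Pr μ (fun ω => B ω = b ∧ g (C ω) = d)) fun a b d => ?_
  have hsplit : ∀ E : Ω → Prop, Pr μ (fun ω => E ω ∧ g (C ω) = d)
      = ∑ c, if g c = d then Pr μ (fun ω => E ω ∧ C ω = c) else 0 :=
    fun E => Pr_and_eq_sum_ite E C (g · = d)
  calc Pr μ (fun ω => A ω = a ∧ B ω = b ∧ g (C ω) = d)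
      = Pr μ (fun ω => (A ω = a ∧ B ω = b) ∧ g (C ω) = d) := Pr_congr fun ω => and_assoc.symm
    _ = ∑ c, if g c = d then Pr μ (fun ω => A ω = a ∧ B ω = b ∧ C ω = c) else 0 := by
      rw [hsplit]
      simp only [and_assoc]
    _ = ∑ c, if g c = d then Pr μ (fun ω => A ω = a ∧ B ω = b) / Pr μ (fun ω => B ω = b)
          * Pr μ (fun ω => B ω = b ∧ C ω = c) else 0 := by
      simp only [Pr_eq_div_mul_of_condMI_eq_zero hμ h]
    _ = _ := by
      rw [hsplit, Finset.mul_sum]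
      simp only [mul_ite, mul_zero]

theorem Hent_comp_of_injective {X : Ω → α} {e : α → β} (he : Injective e) :
    Hent μ (fun ω => e (X ω)) = Hent μ X := by
  unfold Hent ent
  congr 1
  refine (Fintype.sum_of_injective e he _ _ (fun y hy => ?_) fun x => ?_).symm
  · simp only [Set.mem_range, not_exists] at hy
    simp [pushf, hy]
  · simp [pushf, he.eq_iff]

theorem condMI_comp_middle {A : Ω → α} {B : Ω → β} {C : Ω → γ} {e : β → δ} (he : Injective e) :
    condMI μ A (fun ω => e (B ω)) C = condMI μ A B C := by
  have hAB : Hent μ (fun ω => (A ω, e (B ω))) = Hent μ (fun ω => (A ω, B ω)) :=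
    Hent_comp_of_injective (X := fun ω => (A ω, B ω)) (e := Prod.map id e)
      (injective_id.prodMap he)
  have hBC : Hent μ (fun ω => (e (B ω), C ω)) = Hent μ (fun ω => (B ω, C ω)) :=
    Hent_comp_of_injective (X := fun ω => (B ω, C ω)) (e := Prod.map e id)
      (he.prodMap injective_id)
  have hABC : Hent μ (fun ω => (A ω, e (B ω), C ω)) = Hent μ (fun ω => (A ω, B ω, C ω)) :=
    Hent_comp_of_injective (X := fun ω => (A ω, B ω, C ω)) (e := Prod.map id (Prod.map e id))
      (injective_id.prodMap (he.prodMap injective_id))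
  simp only [condMI, hAB, hBC, hABC, Hent_comp_of_injective he]

end ConditionalIndependence

section Rectangle

variable {Ω β β' δ σ₁ σ₂ : Type*} [Fintype Ω] {μ : Ω → ℝ} {w : σ₁ → σ₂ → ℝ}
  {U : Ω → β} {S₁ : Ω → σ₁} {S₂ : Ω → σ₂}

def IsRectangular (μ : Ω → ℝ) (w : σ₁ → σ₂ → ℝ) (U : Ω → β) (S₁ : Ω → σ₁) (S₂ : Ω → σ₂) :
    Prop :=
  ∃ (φ : β → σ₁ → ℝ) (ψ : β → σ₂ → ℝ), ∀ u s₁ s₂,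
    Pr μ (fun ω => U ω = u ∧ S₁ ω = s₁ ∧ S₂ ω = s₂) = w s₁ s₂ * φ u s₁ * ψ u s₂

theorem IsRectangular.symm (h : IsRectangular μ w U S₁ S₂) :
    IsRectangular μ (flip w) U S₂ S₁ := by
  obtain ⟨φ, ψ, h⟩ := h
  refine ⟨ψ, φ, fun u s₂ s₁ => ?_⟩
  rw [Pr_congr fun ω => and_congr_right' and_comm, h, flip]
  ring

theorem IsRectangular.of_fibers {V : Ω → β'} (f : β' → β) (hV : ∀ ω v, V ω = v ↔ U ω = f v)
    (h : IsRectangular μ w U S₁ S₂) : IsRectangular μ w V S₁ S₂ := by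
  obtain ⟨φ, ψ, h⟩ := h
  exact ⟨fun v => φ (f v), fun v => ψ (f v), fun v s₁ s₂ =>
    (Pr_congr fun ω => by rw [hV]).trans (h (f v) s₁ s₂)⟩

variable [Fintype β] [Fintype δ] [Fintype σ₁] [Fintype σ₂]
  [DecidableEq β] [DecidableEq δ] [DecidableEq σ₁] [DecidableEq σ₂]

theorem Pr_eq_div_mul_of_condMI_pair_eq_zero (hμ : IsPMF μ) {M : Ω → δ}
    (hM : condMI μ M (fun ω => (U ω, S₁ ω)) S₂ = 0) (m : δ) (u : β) (s₁ : σ₁) (s₂ : σ₂) :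
    Pr μ (fun ω => M ω = m ∧ U ω = u ∧ S₁ ω = s₁ ∧ S₂ ω = s₂)
      = Pr μ (fun ω => M ω = m ∧ U ω = u ∧ S₁ ω = s₁) / Pr μ (fun ω => U ω = u ∧ S₁ ω = s₁)
        * Pr μ (fun ω => U ω = u ∧ S₁ ω = s₁ ∧ S₂ ω = s₂) := by
  simpa only [Prod.mk.injEq, and_assoc] using Pr_eq_div_mul_of_condMI_eq_zero hμ hM m (u, s₁) s₂

theorem IsRectangular.refine_left (hμ : IsPMF μ) (h : IsRectangular μ w U S₁ S₂) {M : Ω → δ}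
    (hM : condMI μ M (fun ω => (U ω, S₁ ω)) S₂ = 0) :
    IsRectangular μ w (fun ω => (U ω, M ω)) S₁ S₂ := by
  obtain ⟨φ, ψ, h⟩ := h
  refine ⟨fun v s₁ => φ v.1 s₁ * (Pr μ (fun ω => M ω = v.2 ∧ U ω = v.1 ∧ S₁ ω = s₁)
      / Pr μ (fun ω => U ω = v.1 ∧ S₁ ω = s₁)), fun v => ψ v.1, fun ⟨u, m⟩ s₁ s₂ => ?_⟩
  rw [Pr_congr (E' := fun ω => M ω = m ∧ U ω = u ∧ S₁ ω = s₁ ∧ S₂ ω = s₂)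
    fun ω => by simp only [Prod.mk.injEq]; tauto, Pr_eq_div_mul_of_condMI_pair_eq_zero hμ hM, h]
  ring

theorem IsRectangular.refine_right (hμ : IsPMF μ) (h : IsRectangular μ w U S₁ S₂) {M : Ω → δ}
    (hM : condMI μ M (fun ω => (U ω, S₂ ω)) S₁ = 0) :
    IsRectangular μ w (fun ω => (U ω, M ω)) S₁ S₂ :=
  (h.symm.refine_left hμ hM).symm

theorem IsRectangular.extend_left (hμ : IsPMF μ) (h : IsRectangular μ w U S₁ S₂) {Y : Ω → δ}
    (hY : condMI μ Y (fun ω => (U ω, S₁ ω)) S₂ = 0) :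
    IsRectangular μ (fun s₁ s₂ => w s₁.1 s₂) U (fun ω => (S₁ ω, Y ω)) S₂ := by
  obtain ⟨φ, ψ, h⟩ := h
  refine ⟨fun u s => φ u s.1 * (Pr μ (fun ω => Y ω = s.2 ∧ U ω = u ∧ S₁ ω = s.1)
      / Pr μ (fun ω => U ω = u ∧ S₁ ω = s.1)), ψ, fun u ⟨s₁, y⟩ s₂ => ?_⟩
  rw [Pr_congr (E' := fun ω => Y ω = y ∧ U ω = u ∧ S₁ ω = s₁ ∧ S₂ ω = s₂)
    fun ω => by simp only [Prod.mk.injEq]; tauto, Pr_eq_div_mul_of_condMI_pair_eq_zero hμ hY, h]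
  ring

theorem IsRectangular.extend_right (hμ : IsPMF μ) (h : IsRectangular μ w U S₁ S₂) {Y : Ω → δ}
    (hY : condMI μ Y (fun ω => (U ω, S₂ ω)) S₁ = 0) :
    IsRectangular μ (fun s₁ s₂ => w s₁ s₂.1) U S₁ (fun ω => (S₂ ω, Y ω)) :=
  (h.symm.extend_left hμ hY).symm

end Rectangle

theorem IsRectangular.condMI_eq_zero {Ω α β β₁ β₂ γ ζ₁ ζ₂ : Type*} [Fintype Ω]
    [Fintype α] [Fintype β] [Fintype β₁] [Fintype β₂] [Fintype γ] [Fintype ζ₁] [Fintype ζ₂]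
    [DecidableEq α] [DecidableEq β] [DecidableEq β₁] [DecidableEq β₂] [DecidableEq γ]
    {μ : Ω → ℝ} (hμ : IsPMF μ) {w : ζ₁ → ζ₂ → ℝ} {U : Ω → β} {Z₁ : Ω → ζ₁} {Z₂ : Ω → ζ₂}
    (h : IsRectangular μ w U Z₁ Z₂) (f₁ : ζ₁ → α) (g₁ : ζ₁ → β₁) (g₂ : ζ₂ → β₂) (f₂ : ζ₂ → γ)
    (k₁ : ζ₁ → β₂ → ℝ) (k₂ : β₁ → ζ₂ → ℝ) (hw : ∀ z₁ z₂, w z₁ z₂ = k₁ z₁ (g₂ z₂) * k₂ (g₁ z₁) z₂) :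
    condMI μ (fun ω => f₁ (Z₁ ω)) (fun ω => (U ω, g₁ (Z₁ ω), g₂ (Z₂ ω)))
      (fun ω => f₂ (Z₂ ω)) = 0 := by
  obtain ⟨φ, ψ, h⟩ := h
  refine condMI_eq_zero_of_factor hμ
    (fun a b => ∑ z₁, if f₁ z₁ = a ∧ g₁ z₁ = b.2.1 then k₁ z₁ b.2.2 * φ b.1 z₁ else 0)
    (fun b c => ∑ z₂, if g₂ z₂ = b.2.2 ∧ f₂ z₂ = c then k₂ b.2.1 z₂ * ψ b.1 z₂ else 0)
    fun a ⟨u, b₁, b₂⟩ c => ?_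
  rw [Finset.sum_mul_sum, Pr_congr (E' := fun ω => U ω = u ∧
      ((f₁ (Z₁ ω) = a ∧ g₁ (Z₁ ω) = b₁) ∧ (g₂ (Z₂ ω) = b₂ ∧ f₂ (Z₂ ω) = c)))
      fun ω => by simp only [Prod.mk.injEq]; tauto,
    Pr_and_eq_sum_ite _ (fun ω => (Z₁ ω, Z₂ ω)) fun z => (f₁ z.1 = a ∧ g₁ z.1 = b₁) ∧
      (g₂ z.2 = b₂ ∧ f₂ z.2 = c), Fintype.sum_prod_type]
  refine Finset.sum_congr rfl fun z₁ _ => Finset.sum_congr rfl fun z₂ _ => ?_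
  by_cases h₁ : f₁ z₁ = a ∧ g₁ z₁ = b₁
  · by_cases h₂ : g₂ z₂ = b₂ ∧ f₂ z₂ = c
    · rw [if_pos ⟨h₁, h₂⟩, if_pos h₁, if_pos h₂, Pr_congr fun ω => by rw [Prod.mk.injEq], h,
        hw, h₁.2, h₂.1]
      ring
    · simp [h₂]
  · simp [h₁]

theorem IsRectangular.transcript {Ω 𝒜 𝒞 σ₁ σ₂ : Type*} {r : ℕ} [Fintype Ω] [Fintype 𝒜]
    [Fintype 𝒞] [Fintype σ₁] [Fintype σ₂] [DecidableEq 𝒜] [DecidableEq 𝒞] [DecidableEq σ₁]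
    [DecidableEq σ₂] {μ : Ω → ℝ} (hμ : IsPMF μ) {w : σ₁ → σ₂ → ℝ} {G : Ω → 𝒜}
    {C : Fin r → Ω → 𝒞} {X₁ : Ω → σ₁} {X₂ : Ω → σ₂} (h : IsRectangular μ w G X₁ X₂)
    (hodd : ∀ i : Fin r, Even i.val →
      condMI μ (C i)
        (fun ω => (G ω, (fun j : Fin i.val => C (Fin.castLE i.isLt.le j) ω), X₁ ω)) X₂ = 0)
    (heven : ∀ i : Fin r, Odd i.val →
      condMI μ (C i)
        (fun ω => (G ω, (fun j : Fin i.val => C (Fin.castLE i.isLt.le j) ω), X₂ ω)) X₁ = 0) :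
    IsRectangular μ w (fun ω => (G ω, fun i => C i ω)) X₁ X₂ := by
  suffices ∀ i (hi : i ≤ r),
      IsRectangular μ w (fun ω => (G ω, fun j : Fin i => C (Fin.castLE hi j) ω)) X₁ X₂ from
    this r le_rfl
  intro i
  induction i with
  | zero =>
    intro _
    exact h.of_fibers Prod.fst fun ω v => by simp [Prod.ext_iff, funext_iff]
  | succ i ih =>
    intro hi
    have hir : i < r := hi
    have hstep : IsRectangular μ w
        (fun ω => ((G ω, fun j : Fin i => C (Fin.castLE hir.le j) ω), C ⟨i, hir⟩ ω)) X₁ X₂ := by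
      rcases Nat.even_or_odd i with hpar | hpar
      · refine (ih hir.le).refine_left hμ ?_
        rw [← condMI_comp_middle (Equiv.prodAssoc _ _ _).injective]
        exact hodd ⟨i, hir⟩ hpar
      · refine (ih hir.le).refine_right hμ ?_
        rw [← condMI_comp_middle (Equiv.prodAssoc _ _ _).injective]
        exact heven ⟨i, hir⟩ hpar
    refine hstep.of_fibers (fun v => ((v.1, Fin.init v.2), v.2 (Fin.last i))) fun ω v => ?_
    simp only [Prod.ext_iff, funext_iff, Fin.forall_fin_succ', Fin.init, and_assoc]
    -- `Fin.castLE hi (Fin.last i)` and `⟨i, hir⟩` agree definitionally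
    rfl

theorem isRectangular_of_pushf_eq_mul_prod {Ω 𝒜 𝒳₁ 𝒳₂ : Type*} {n : ℕ} [Fintype Ω]
    [DecidableEq 𝒜] [DecidableEq 𝒳₁] [DecidableEq 𝒳₂] {μ : Ω → ℝ} {G : Ω → 𝒜}
    {X₁ : Ω → Fin n → 𝒳₁} {X₂ : Ω → Fin n → 𝒳₂} (p : 𝒳₁ × 𝒳₂ → ℝ)
    (h : pushf μ (fun ω => (G ω, fun q => (X₁ ω q, X₂ ω q)))
      = fun z => pushf μ G z.1 * ∏ q, p (z.2 q)) :
    IsRectangular μ (fun x₁ x₂ => ∏ q, p (x₁ q, x₂ q)) G X₁ X₂ := by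
  refine ⟨fun g _ => pushf μ G g, fun _ _ => 1, fun g x₁ x₂ => ?_⟩
  have hg := congrFun h (g, fun q => (x₁ q, x₂ q))
  rw [pushf_eq_Pr] at hg
  rw [Pr_congr fun ω => ?_, hg, mul_one, mul_comm]
  simp [Prod.ext_iff, funext_iff, forall_and]

theorem Fintype.prod_eq_prod_lt_mul_prod_le {ι M : Type*} [Fintype ι] [LinearOrder ι]
    [CommMonoid M] (f : ι → M) (q : ι) :
    ∏ j, f j = (∏ j : {j // j < q}, f j) * ∏ j : {j // q ≤ j}, f j := by
  rw [← Fintype.prod_subtype_mul_prod_subtype (· < q)]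
  exact congrArg _ (Fintype.prod_equiv (Equiv.subtypeEquivRight fun j => not_lt) _ _ fun j => rfl)

theorem markov_single_letter_output_general {Ω 𝒜 𝒞 𝒳₁ 𝒳₂ 𝒴₁ 𝒴₂ : Type*} {n r : ℕ}
    [Fintype Ω] [Fintype 𝒜] [Fintype 𝒞] [Fintype 𝒳₁] [Fintype 𝒳₂]
    [Fintype 𝒴₁] [Fintype 𝒴₂]
    [DecidableEq 𝒜] [DecidableEq 𝒞] [DecidableEq 𝒳₁] [DecidableEq 𝒳₂]
    [DecidableEq 𝒴₁] [DecidableEq 𝒴₂]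
    (μ : Ω → ℝ) (hμ : IsPMF μ)
    (G : Ω → 𝒜) (C : Fin r → Ω → 𝒞)
    (X1 : Ω → Fin n → 𝒳₁) (X2 : Ω → Fin n → 𝒳₂)
    (Y1 : Ω → Fin n → 𝒴₁) (Y2 : Ω → Fin n → 𝒴₂)
    (p : 𝒳₁ × 𝒳₂ → ℝ)
    (hiid : pushf μ (fun ω => (G ω, fun q => (X1 ω q, X2 ω q)))
      = fun z => pushf μ G z.1 * ∏ q, p (z.2 q))
    (hodd : ∀ i : Fin r, Even i.val →
      condMI μ (C i)
        (fun ω => (G ω, (fun j : Fin i.val => C (Fin.castLE i.isLt.le j) ω), X1 ω))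
        X2 = 0)
    (heven : ∀ i : Fin r, Odd i.val →
      condMI μ (C i)
        (fun ω => (G ω, (fun j : Fin i.val => C (Fin.castLE i.isLt.le j) ω), X2 ω))
        X1 = 0)
    (hY1 : condMI μ Y1 (fun ω => (G ω, (fun i : Fin r => C i ω), X1 ω))
      (fun ω => (X2 ω, Y2 ω)) = 0)
    (hY2 : condMI μ Y2 (fun ω => (G ω, (fun i : Fin r => C i ω), X2 ω))
      (fun ω => (X1 ω, Y1 ω)) = 0) :
    ∀ q : Fin n,
      condMI μ (fun ω => Y1 ω q)
        (fun ω => ((G ω, (fun i : Fin r => C i ω)),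
          ((fun j : {j : Fin n // q ≤ j} => X1 ω j.1),
           (fun j : {j : Fin n // j < q} => X2 ω j.1))))
        (fun ω => (X2 ω q, Y2 ω q)) = 0 := by
  have hX := (isRectangular_of_pushf_eq_mul_prod p hiid).transcript hμ hodd heven
  have hY₁ : condMI μ Y1 (fun ω => ((G ω, fun i => C i ω), X1 ω)) X2 = 0 := by
    rw [← condMI_comp_middle (Equiv.prodAssoc _ _ _).injective]
    exact condMI_comp_right_eq_zero hμ hY1 Prod.fst
  have hY₂ : condMI μ Y2 (fun ω => ((G ω, fun i => C i ω), X2 ω))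
      (fun ω => (X1 ω, Y1 ω)) = 0 := by
    rwa [← condMI_comp_middle (Equiv.prodAssoc _ _ _).injective]
  have hXY := (hX.extend_left hμ hY₁).extend_right hμ hY₂
  intro q
  exact hXY.condMI_eq_zero hμ (fun z => z.2 q) (fun z (j : {j // q ≤ j}) => z.1 j.1)
    (fun z (j : {j // j < q}) => z.1 j.1) (fun z => (z.1 q, z.2 q))
    (fun z v => ∏ j : {j // j < q}, p (z.1 j, v j)) (fun u z => ∏ j : {j // q ≤ j}, p (u j, z.1 j))
    fun _ _ => Fintype.prod_eq_prod_lt_mul_prod_le _ q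

/-- with the interactive structure of Statements 9–10 plus output
variables `Y_1^n, Y_2^n` satisfying `Y_1^n — (G, C_{[1:r]}, X_1^n) — (X_2^n, Y_2^n)`
and `Y_2^n — (G, C_{[1:r]}, X_2^n) — (X_1^n, Y_1^n)`, for each `q` the Markov chain
`Y_{1,q} — (G, C_{[1:r]}, X_1^{q:n}, X_2^{1:q-1}) — (X_{2,q}, Y_{2,q})` holds. -/
theorem markov_single_letter_output {Ω 𝒜 𝒞 𝒳₁ 𝒳₂ 𝒴₁ 𝒴₂ : Type*} {n r : ℕ}
    [Fintype Ω] [Fintype 𝒜] [Fintype 𝒞] [Fintype 𝒳₁] [Fintype 𝒳₂]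
    [Fintype 𝒴₁] [Fintype 𝒴₂]
    [DecidableEq 𝒜] [DecidableEq 𝒞] [DecidableEq 𝒳₁] [DecidableEq 𝒳₂]
    [DecidableEq 𝒴₁] [DecidableEq 𝒴₂]
    (μ : Ω → ℝ) (hμ : IsPMF μ)
    (G : Ω → 𝒜) (C : Fin r → Ω → 𝒞)
    (X1 : Ω → Fin n → 𝒳₁) (X2 : Ω → Fin n → 𝒳₂)
    (Y1 : Ω → Fin n → 𝒴₁) (Y2 : Ω → Fin n → 𝒴₂)
    (p : 𝒳₁ × 𝒳₂ → ℝ) (hp : IsPMF p)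
    (hiid : pushf μ (fun ω => (G ω, fun q => (X1 ω q, X2 ω q)))
      = fun z => pushf μ G z.1 * ∏ q, p (z.2 q))
    (hodd : ∀ i : Fin r, Even i.val →
      condMI μ (C i)
        (fun ω => (G ω, (fun j : Fin i.val => C (Fin.castLE i.isLt.le j) ω), X1 ω))
        X2 = 0)
    (heven : ∀ i : Fin r, Odd i.val →
      condMI μ (C i)
        (fun ω => (G ω, (fun j : Fin i.val => C (Fin.castLE i.isLt.le j) ω), X2 ω))
        X1 = 0)
    (hY1 : condMI μ Y1 (fun ω => (G ω, (fun i : Fin r => C i ω), X1 ω))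
      (fun ω => (X2 ω, Y2 ω)) = 0)
    (hY2 : condMI μ Y2 (fun ω => (G ω, (fun i : Fin r => C i ω), X2 ω))
      (fun ω => (X1 ω, Y1 ω)) = 0) :
    ∀ q : Fin n,
      condMI μ (fun ω => Y1 ω q)
        (fun ω => ((G ω, (fun i : Fin r => C i ω)),
          ((fun j : {j : Fin n // q ≤ j} => X1 ω j.1),
           (fun j : {j : Fin n // j < q} => X2 ω j.1))))
        (fun ω => (X2 ω q, Y2 ω q)) = 0 :=
  markov_single_letter_output_general μ hμ G C X1 X2 Y1 Y2 p hiid hodd heven hY1 hY2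
end
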